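/- arXiv:1907.13217 — 3 statements merged into one kernel-verified Lean document; each statement's English description precedes it below -/
import Mathlib

section
/- Let $X$ be a finite subset of the affine space $\mathbb{A}^s = K^s$ over a finite field $K = \mathbb{F}_q$, let $I = I(X)$ be its vanishing ideal, let $\prec$ be a monomial order on $S$, let $\mathcal{L}$ be a $K$-linear subspace of $K\Delta_\prec(I)$, and let $\mathcal{L}_X$ be the corresponding standard evaluation code on $X$. Then for every integer $1 \le r \le \dim_K(\mathcal{L}_X)$ one has $\delta_r(\mathcal{L}_X) = \deg(S/I) - \max\{\deg(S/(I,F)) \mid F \in \mathcal{L}_{\prec,r}\}$. -/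
open MvPolynomial
open scoped MonomialOrder

variable {K : Type*} [Field K] {s : ℕ}

/-- The exponent of the initial (leading) monomial of `f` with respect to the
monomial order `m` (it is `0` for `f = 0`). -/
noncomputable def leadExp (m : MonomialOrder (Fin s)) (f : MvPolynomial (Fin s) K) :
    Fin s →₀ ℕ :=
  m.toSyn.symm (f.support.sup fun a => m.toSyn a)

/-- The coefficient of the initial monomial of `f`; `f` is monic when this is `1`. -/
noncomputable def leadCoeff (m : MonomialOrder (Fin s)) (f : MvPolynomial (Fin s) K) : K :=
  f.coeff (leadExp m f)

/-- The initial monomial `in_≺(f)` of `f`, as a (monic) monomial of the polynomial ring. -/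
noncomputable def leadMon (m : MonomialOrder (Fin s)) (f : MvPolynomial (Fin s) K) :
    MvPolynomial (Fin s) K :=
  monomial (leadExp m f) (1 : K)

/-- The initial ideal `in_≺(I)` of an ideal `I`: the ideal generated by the initial
monomials of the nonzero elements of `I`. -/
noncomputable def initialIdeal (m : MonomialOrder (Fin s)) (I : Ideal (MvPolynomial (Fin s) K)) :
    Ideal (MvPolynomial (Fin s) K) :=
  Ideal.span { g | ∃ f ∈ I, f ≠ 0 ∧ g = leadMon m f }

/-- The footprint `Δ_≺(I)` of `S/I`: the set of standard monomials, i.e. the (monic)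
monomials that do not belong to the initial ideal of `I`. -/
noncomputable def stdMonomials (m : MonomialOrder (Fin s)) (I : Ideal (MvPolynomial (Fin s) K)) :
    Set (MvPolynomial (Fin s) K) :=
  { g | (∃ a : Fin s →₀ ℕ, g = monomial a (1 : K)) ∧ g ∉ initialIdeal m I }

/-- `KΔ_≺(I)`, the `K`-linear span of the standard monomials of `S/I`. -/
noncomputable def stdSpan (m : MonomialOrder (Fin s)) (I : Ideal (MvPolynomial (Fin s) K)) :
    Submodule K (MvPolynomial (Fin s) K) :=
  Submodule.span K (stdMonomials m I)

/-- A monomial order is graded if monomials are first compared by their total degrees. -/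
def IsGradedOrder (m : MonomialOrder (Fin s)) : Prop :=
  ∀ a b : Fin s →₀ ℕ, a.degree < b.degree → a ≺[m] b

/-- The vanishing ideal `I(X)` of a set of points `X ⊆ 𝔸^s = K^s`. -/
def affVanishingIdeal (X : Set (Fin s → K)) : Ideal (MvPolynomial (Fin s) K) where
  carrier := { f | ∀ x ∈ X, eval x f = 0 }
  add_mem' := by
    intro a b ha hb x hx
    simp [ha x hx, hb x hx]
  zero_mem' := by intro x hx; simp
  smul_mem' := by
    intro c f hf x hx
    simp [smul_eq_mul, hf x hx]

/-- The evaluation map `S → K^X`, `f ↦ (f(P₁),…,f(P_m))`, at the points of a finite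
set `X` of points of `𝔸^s`. -/
noncomputable def evalMap (X : Finset (Fin s → K)) :
    MvPolynomial (Fin s) K →ₗ[K] (X → K) where
  toFun f := fun x => eval (x : Fin s → K) f
  map_add' f g := by funext x; simp
  map_smul' c f := by funext x; simp [Algebra.smul_def]

/-- The degree `deg(S/I)`.  For the ideals considered in this paper `S/I` is a
zero-dimensional ring, and its degree (the normalized leading coefficient of the
affine Hilbert polynomial) equals `dim_K (S/I)` (and is `0` when `I = S`). -/
noncomputable def adeg (I : Ideal (MvPolynomial (Fin s) K)) : ℕ :=
  Module.finrank K (MvPolynomial (Fin s) K ⧸ I)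

/-- The affine Hilbert function `H_I^a(d) = dim_K (S_{≤d}/I_{≤d})`, computed as the
dimension of the image of `S_{≤d}` in `S/I`. -/
noncomputable def affineHilbert (I : Ideal (MvPolynomial (Fin s) K)) (d : ℕ) : ℕ :=
  Module.finrank K
    ((restrictTotalDegree (Fin s) K d).map (Submodule.restrictScalars K I).mkQ)

/-- The support `χ(D)` of a subcode `D ⊆ K^ι`. -/
def codeSupport {ι : Type*} (D : Submodule K (ι → K)) : Set ι :=
  { i | ∃ v ∈ D, v i ≠ 0 }

/-- The `r`-th generalized Hamming weight of a linear code `C ⊆ K^ι`: the minimum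
size of the support of an `r`-dimensional subcode. -/
noncomputable def ghw {ι : Type*} (C : Submodule K (ι → K)) (r : ℕ) : ℕ :=
  sInf { n | ∃ D : Submodule K (ι → K),
    D ≤ C ∧ Module.finrank K (↥D) = r ∧ (codeSupport D).ncard = n }

/-- The minimum distance of a linear code: the least Hamming weight of a nonzero
codeword. -/
noncomputable def minDist {ι : Type*} (C : Submodule K (ι → K)) : ℕ :=
  sInf { n | ∃ v ∈ C, v ≠ 0 ∧ ({ i : ι | v i ≠ 0 }).ncard = n }

/-- The affine torus `T = (K^*)^s`. -/
noncomputable def torus (K : Type*) [Field K] [Fintype K] (s : ℕ) : Finset (Fin s → K) :=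
  letI := Classical.decEq K
  Finset.univ.filter fun x => ∀ i, x i ≠ 0

/-- `V_d`: the set of squarefree (monic) monomials of degree `d`. -/
def sqfreeMonomials (K : Type*) [Field K] (s d : ℕ) : Set (MvPolynomial (Fin s) K) :=
  { g | ∃ a : Fin s →₀ ℕ, (∀ i, a i ≤ 1) ∧ a.degree = d ∧ g = monomial a (1 : K) }

/-- `V_{≤d}`: the set of squarefree (monic) monomials of degree at most `d`. -/
def sqfreeMonomialsLe (K : Type*) [Field K] (s d : ℕ) : Set (MvPolynomial (Fin s) K) :=
  { g | ∃ a : Fin s →₀ ℕ, (∀ i, a i ≤ 1) ∧ a.degree ≤ d ∧ g = monomial a (1 : K) }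

/-- `𝓛_{≺,r}`: the family of `r`-element subsets `F` of `𝓛 \ {0}` consisting of monic
polynomials with pairwise distinct initial monomials. -/
def LprecSet (m : MonomialOrder (Fin s)) (L : Submodule K (MvPolynomial (Fin s) K)) (r : ℕ) :
    Set (Finset (MvPolynomial (Fin s) K)) :=
  { F | F.card = r ∧ (∀ f ∈ F, f ∈ L ∧ f ≠ 0 ∧ leadCoeff m f = 1) ∧
        ∀ f ∈ F, ∀ g ∈ F, leadExp m f = leadExp m g → f = g }
section AuxLead

variable {K : Type*} [Field K] {s : ℕ}

open MvPolynomial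
open scoped MonomialOrder

lemma leadExp_mem_support {m : MonomialOrder (Fin s)} {f : MvPolynomial (Fin s) K}
    (hf : f ≠ 0) : leadExp m f ∈ f.support := by
  have hs : f.support.Nonempty := by
    rw [Finset.nonempty_iff_ne_empty]
    simpa [MvPolynomial.support_eq_empty] using hf
  obtain ⟨a, ha, h⟩ := Finset.exists_mem_eq_sup f.support hs (fun a => m.toSyn a)
  rw [leadExp, h]
  simpa using ha

lemma leadCoeff_ne_zero {m : MonomialOrder (Fin s)} {f : MvPolynomial (Fin s) K}
    (hf : f ≠ 0) : leadCoeff m f ≠ 0 := by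
  rw [leadCoeff, ← MvPolynomial.mem_support_iff]
  exact leadExp_mem_support hf

lemma le_leadExp {m : MonomialOrder (Fin s)} {f : MvPolynomial (Fin s) K}
    {a : Fin s →₀ ℕ} (h : a ∈ f.support) : a ≼[m] leadExp m f := by
  rw [leadExp, AddEquiv.apply_symm_apply]
  exact Finset.le_sup h

lemma coeff_eq_zero_of_leadExp_lt {m : MonomialOrder (Fin s)} {f : MvPolynomial (Fin s) K}
    {a : Fin s →₀ ℕ} (h : leadExp m f ≺[m] a) : f.coeff a = 0 := by
  by_contra hc
  exact absurd (le_leadExp (m := m) (MvPolynomial.mem_support_iff.mpr hc)) (not_le.mpr h)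

lemma leadExp_smul {m : MonomialOrder (Fin s)} {f : MvPolynomial (Fin s) K}
    {c : K} (hc : c ≠ 0) : leadExp m (c • f) = leadExp m f := by
  rw [leadExp, leadExp, MvPolynomial.support_smul_eq hc]

end AuxLead
section AuxIndep

variable {K : Type*} [Field K] {s : ℕ}

open MvPolynomial
open scoped MonomialOrder

lemma linearIndependent_of_distinct_leadExp (m : MonomialOrder (Fin s))
    (F : Finset (MvPolynomial (Fin s) K))
    (h0 : ∀ f ∈ F, f ≠ 0)
    (hinj : ∀ f ∈ F, ∀ g ∈ F, leadExp m f = leadExp m g → f = g) :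
    LinearIndependent K (fun f : F => (f : MvPolynomial (Fin s) K)) := by
  classical
  rw [Fintype.linearIndependent_iff]
  intro g hg
  by_contra hall
  push_neg at hall
  obtain ⟨i, hi⟩ := hall
  have hGne : (Finset.univ.filter (fun i : F => g i ≠ 0)).Nonempty := ⟨i, by simp [hi]⟩
  obtain ⟨i0, hi0mem, hi0max⟩ := Finset.exists_max_image
    (Finset.univ.filter (fun i : F => g i ≠ 0)) (fun i : F => m.toSyn (leadExp m i.1)) hGne
  have hgi0 : g i0 ≠ 0 := (Finset.mem_filter.mp hi0mem).2
  have hc : MvPolynomial.coeff (leadExp m i0.1) (∑ j : F, g j • (j : MvPolynomial (Fin s) K))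
      = g i0 * leadCoeff m i0.1 := by
    rw [MvPolynomial.coeff_sum]
    rw [Finset.sum_eq_single i0]
    · simp [leadCoeff, MvPolynomial.coeff_smul, smul_eq_mul]
    · intro j _ hj
      rcases eq_or_ne (g j) 0 with h | h
      · simp [h]
      · have hjmem : j ∈ Finset.univ.filter (fun i : F => g i ≠ 0) := by simp [h]
        have hle := hi0max j hjmem
        have hne : leadExp m j.1 ≠ leadExp m i0.1 := by
          intro he
          exact hj (Subtype.ext (hinj _ j.2 _ i0.2 he))
        have hlt : leadExp m j.1 ≺[m] leadExp m i0.1 :=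
          lt_of_le_of_ne hle (fun hh => hne (m.toSyn.injective hh))
        rw [MvPolynomial.coeff_smul, coeff_eq_zero_of_leadExp_lt hlt, smul_zero]
    · intro h
      exact absurd (Finset.mem_univ i0) h
  rw [hg] at hc
  simp only [MvPolynomial.coeff_zero] at hc
  exact hgi0 (by
    rcases mul_eq_zero.mp hc.symm with h | h
    · exact h
    · exact absurd h (leadCoeff_ne_zero (h0 _ i0.2)))

lemma mem_stdSpan_support {m : MonomialOrder (Fin s)} {I : Ideal (MvPolynomial (Fin s) K)}
    {f : MvPolynomial (Fin s) K} (hf : f ∈ stdSpan m I) :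
    ∀ a ∈ f.support, (monomial a (1 : K)) ∉ initialIdeal m I := by
  classical
  let N : Submodule K (MvPolynomial (Fin s) K) :=
    { carrier := {f | ∀ a ∈ f.support, (monomial a (1 : K)) ∉ initialIdeal m I}
      add_mem' := by
        intro p q hp hq a ha
        rcases Finset.mem_union.mp (Finsupp.support_add ha) with h | h
        · exact hp a h
        · exact hq a h
      zero_mem' := by intro a ha; simp at ha
      smul_mem' := by
        intro c p hp a ha
        exact hp a (Finsupp.support_smul ha) }
  have hle : stdSpan m I ≤ N := by
    rw [stdSpan, Submodule.span_le]
    rintro g ⟨⟨a, rfl⟩, hg⟩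
    intro b hb
    have : b = a := by
      have := MvPolynomial.support_monomial_subset hb
      simpa using this
    rwa [this]
  exact hle hf

end AuxIndep
section AuxEval

variable {K : Type*} [Field K] {s : ℕ}

open MvPolynomial
open scoped MonomialOrder

lemma ker_evalMap (X : Finset (Fin s → K)) :
    LinearMap.ker (evalMap X) =
      (affVanishingIdeal (X : Set (Fin s → K))).restrictScalars K := by
  ext f
  constructor
  · intro hf x hx
    have : (fun x : X => eval (x : Fin s → K) f) = 0 := hf
    exact congrFun this ⟨x, hx⟩
  · intro hf
    have : (fun x : X => eval (x : Fin s → K) f) = 0 := by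
      funext x
      exact hf x.1 x.2
    exact this

lemma stdSpan_disjoint_ker (m : MonomialOrder (Fin s)) (X : Finset (Fin s → K)) :
    Disjoint (stdSpan m (affVanishingIdeal (X : Set (Fin s → K))))
      (LinearMap.ker (evalMap X)) := by
  rw [Submodule.disjoint_def]
  intro f hf hker
  by_contra hf0
  have hI : f ∈ affVanishingIdeal (X : Set (Fin s → K)) := by
    rw [ker_evalMap] at hker
    exact hker
  have hmem : leadMon m f ∈ initialIdeal m (affVanishingIdeal (X : Set (Fin s → K))) :=
    Ideal.subset_span ⟨f, hI, hf0, rfl⟩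
  exact mem_stdSpan_support hf (leadExp m f) (leadExp_mem_support hf0) hmem

open scoped Classical in
/-- A polynomial taking the value `1` at `x` and `0` at `y` (when `x ≠ y`). -/
noncomputable def sepPoly (x y : Fin s → K) : MvPolynomial (Fin s) K :=
  if h : ∃ i, x i ≠ y i then
    C (x h.choose - y h.choose)⁻¹ * (MvPolynomial.X h.choose - C (y h.choose))
  else 1

open scoped Classical in
lemma eval_sepPoly_self (x y : Fin s → K) : eval x (sepPoly x y) = 1 := by
  rw [sepPoly]
  split_ifs with h
  · have hne : x h.choose - y h.choose ≠ 0 := sub_ne_zero.mpr h.choose_spec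
    simp [inv_mul_cancel₀ hne]
  · simp

open scoped Classical in
lemma eval_sepPoly_other {x y : Fin s → K} (hxy : x ≠ y) : eval y (sepPoly x y) = 0 := by
  rw [sepPoly]
  have h : ∃ i, x i ≠ y i := Function.ne_iff.mp hxy
  rw [dif_pos h]
  simp

open scoped Classical in
/-- An indicator polynomial: value `1` at `x`, value `0` at the other points of `Y`. -/
noncomputable def indicatorPoly (Y : Finset (Fin s → K)) (x : Fin s → K) :
    MvPolynomial (Fin s) K :=
  ∏ y ∈ Y.erase x, sepPoly x y

open scoped Classical in
lemma eval_indicatorPoly_self (Y : Finset (Fin s → K)) (x : Fin s → K) :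
    eval x (indicatorPoly Y x) = 1 := by
  rw [indicatorPoly, map_prod]
  exact Finset.prod_eq_one fun y _ => eval_sepPoly_self x y

open scoped Classical in
lemma eval_indicatorPoly_other {Y : Finset (Fin s → K)} {x z : Fin s → K}
    (hz : z ∈ Y) (hzx : z ≠ x) : eval z (indicatorPoly Y x) = 0 := by
  rw [indicatorPoly, map_prod]
  exact Finset.prod_eq_zero (Finset.mem_erase.mpr ⟨hzx, hz⟩)
    (eval_sepPoly_other (Ne.symm hzx))

open scoped Classical in
lemma evalMap_surjective (Y : Finset (Fin s → K)) :
    Function.Surjective (evalMap Y) := by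
  intro v
  refine ⟨∑ x ∈ Y.attach, C (v x) * indicatorPoly Y x.1, ?_⟩
  funext z
  show eval (z : Fin s → K) (∑ x ∈ Y.attach, C (v x) * indicatorPoly Y x.1) = v z
  rw [map_sum]
  rw [Finset.sum_eq_single z]
  · simp [eval_indicatorPoly_self]
  · intro x _ hxz
    have : (z : Fin s → K) ≠ x.1 := fun h => hxz (Subtype.ext h.symm)
    simp [eval_indicatorPoly_other z.2 this]
  · intro h
    exact absurd (Finset.mem_attach _ _) h

lemma adeg_affVanishingIdeal (Y : Finset (Fin s → K)) :
    adeg (affVanishingIdeal (Y : Set (Fin s → K))) = Y.card := by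
  classical
  rw [adeg]
  have e1 := Submodule.Quotient.restrictScalarsEquiv K
    (affVanishingIdeal (Y : Set (Fin s → K)))
  have e2 := LinearMap.quotKerEquivOfSurjective (evalMap Y) (evalMap_surjective Y)
  rw [ker_evalMap] at e2
  have := (e1.symm.trans e2).finrank_eq
  rw [this, Module.finrank_fintype_fun_eq_card, Fintype.card_coe]

end AuxEval
section AuxTri

variable {K : Type*} [Field K] {s : ℕ}

open MvPolynomial
open scoped MonomialOrder

lemma triangulate (m : MonomialOrder (Fin s)) :
    ∀ (n : ℕ) (W : Submodule K (MvPolynomial (Fin s) K)), FiniteDimensional K W →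
    Module.finrank K W = n →
    ∃ F : Finset (MvPolynomial (Fin s) K), F.card = n ∧
      (∀ f ∈ F, f ∈ W ∧ f ≠ 0 ∧ leadCoeff m f = 1) ∧
      (∀ f ∈ F, ∀ g ∈ F, leadExp m f = leadExp m g → f = g) ∧
      Submodule.span K (F : Set (MvPolynomial (Fin s) K)) = W := by
  intro n
  induction n with
  | zero =>
    intro W hfd hrk
    refine ⟨∅, rfl, by simp, by simp, ?_⟩
    rw [Finset.coe_empty, Submodule.span_empty]
    exact (Submodule.finrank_eq_zero.mp hrk).symm
  | succ n ih =>
    intro W hfd hrk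
    classical
    have hWne : W ≠ ⊥ := by
      intro h
      rw [h] at hrk
      
      rw [finrank_bot] at hrk; omega
    obtain ⟨f, hfW, hf0⟩ := Submodule.exists_mem_ne_zero_of_ne_bot hWne
    set c : K := leadCoeff m f with hc
    have hcne : c ≠ 0 := leadCoeff_ne_zero hf0
    set f' : MvPolynomial (Fin s) K := c⁻¹ • f with hf'
    have hf'0 : f' ≠ 0 := smul_ne_zero (inv_ne_zero hcne) hf0
    have hf'W : f' ∈ W := W.smul_mem _ hfW
    set e : Fin s →₀ ℕ := leadExp m f with he
    have hle : leadExp m f' = e := leadExp_smul (inv_ne_zero hcne)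
    have hcoef1 : MvPolynomial.coeff e f' = 1 := by
      rw [hf', MvPolynomial.coeff_smul, smul_eq_mul, he]
      exact inv_mul_cancel₀ hcne
    have hlc1 : leadCoeff m f' = 1 := by rw [leadCoeff, hle, hcoef1]
    -- the hyperplane of W where the coefficient at `e` vanishes
    set φ : MvPolynomial (Fin s) K →ₗ[K] K := MvPolynomial.lcoeff K e with hφ
    set W' : Submodule K (MvPolynomial (Fin s) K) := W ⊓ LinearMap.ker φ with hW'
    have hW'le : W' ≤ W := inf_le_left
    haveI : FiniteDimensional K W' := Submodule.finiteDimensional_of_le hW'le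
    have hφ' : Function.Surjective (φ ∘ₗ W.subtype) := by
      intro a
      refine ⟨a • ⟨f', hf'W⟩, ?_⟩
      simp [hφ, MvPolynomial.lcoeff, hcoef1, smul_eq_mul]
    have hrk' : Module.finrank K W' = n := by
      have h1 := LinearMap.finrank_range_add_finrank_ker (φ ∘ₗ W.subtype)
      rw [LinearMap.range_eq_top.mpr hφ', finrank_top, hrk] at h1
      have h2 : Module.finrank K K = 1 := Module.finrank_self K
      have hker : LinearMap.ker (φ ∘ₗ W.subtype) = Submodule.comap W.subtype (LinearMap.ker φ) := by
        rw [LinearMap.ker_comp]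
      have h3 : Module.finrank K W' =
          Module.finrank K (LinearMap.ker (φ ∘ₗ W.subtype)) := by
        rw [hker, ← Submodule.finrank_map_subtype_eq W
          (Submodule.comap W.subtype (LinearMap.ker φ)), Submodule.map_comap_subtype]
      omega
    obtain ⟨F', hcard, hmem, hdist, hspan⟩ := ih W' inferInstance hrk'
    have hf'notker : MvPolynomial.coeff e f' ≠ 0 := by rw [hcoef1]; exact one_ne_zero
    have hker_coeff : ∀ g ∈ W', MvPolynomial.coeff e g = 0 := by
      intro g hg
      exact hg.2
    have hf'notF' : f' ∉ F' := by
      intro h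
      exact hf'notker (hker_coeff f' ((hmem f' h).1))
    refine ⟨insert f' F', ?_, ?_, ?_, ?_⟩
    · rw [Finset.card_insert_of_notMem hf'notF', hcard]
    · intro g hg
      rcases Finset.mem_insert.mp hg with h | h
      · exact h ▸ ⟨hf'W, hf'0, hlc1⟩
      · exact ⟨hW'le (hmem g h).1, (hmem g h).2⟩
    · intro g hg h hh hgh
      rcases Finset.mem_insert.mp hg with hg' | hg' <;>
        rcases Finset.mem_insert.mp hh with hh' | hh'
      · rw [hg', hh']
      · exfalso
        have hh0 : h ≠ 0 := (hmem h hh').2.1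
        have : MvPolynomial.coeff e h ≠ 0 := by
          have : leadExp m h = e := by rw [← hgh, hg', hle]
          rw [← this]
          exact leadCoeff_ne_zero hh0
        exact this (hker_coeff h (hmem h hh').1)
      · exfalso
        have hg0 : g ≠ 0 := (hmem g hg').2.1
        have : MvPolynomial.coeff e g ≠ 0 := by
          have : leadExp m g = e := by rw [hgh, hh', hle]
          rw [← this]
          exact leadCoeff_ne_zero hg0
        exact this (hker_coeff g (hmem g hg').1)
      · exact hdist g hg' h hh' hgh
    · rw [Finset.coe_insert, Submodule.span_insert]
      rw [hspan]
      apply le_antisymm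
      · apply sup_le
        · rwa [Submodule.span_singleton_le_iff_mem]
        · exact hW'le
      · intro g hg
        have hsplit : g = (MvPolynomial.coeff e g) • f' + (g - (MvPolynomial.coeff e g) • f') := by
          ring
        rw [hsplit]
        apply Submodule.add_mem
        · exact Submodule.mem_sup_left (Submodule.smul_mem _ _ (Submodule.mem_span_singleton_self f'))
        · apply Submodule.mem_sup_right
          constructor
          · exact Submodule.sub_mem W hg (W.smul_mem _ hf'W)
          · show MvPolynomial.coeff e (g - (MvPolynomial.coeff e g) • f') = 0
            rw [MvPolynomial.coeff_sub, MvPolynomial.coeff_smul, hcoef1, smul_eq_mul,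
              mul_one, sub_self]
  
end AuxTri
section AuxZ

variable {K : Type*} [Field K] {s : ℕ}

open MvPolynomial
open scoped MonomialOrder

open scoped Classical in
lemma sup_span_eq_vanishing (X Z : Finset (Fin s → K)) (F : Finset (MvPolynomial (Fin s) K))
    (hZ : ∀ x, x ∈ Z ↔ x ∈ X ∧ ∀ f ∈ F, eval x f = 0) :
    affVanishingIdeal (X : Set (Fin s → K)) ⊔ Ideal.span (F : Set (MvPolynomial (Fin s) K)) =
      affVanishingIdeal (Z : Set (Fin s → K)) := by
  apply le_antisymm
  · apply sup_le
    · intro h hh z hz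
      exact hh z ((hZ z).mp hz).1
    · rw [Ideal.span_le]
      intro f hf z hz
      exact ((hZ z).mp hz).2 f hf
  · intro h hh
    have hex : ∀ x ∈ X \ Z, ∃ f, f ∈ F ∧ eval x f ≠ 0 := by
      intro x hx
      rcases Finset.mem_sdiff.mp hx with ⟨hxX, hxZ⟩
      by_contra hno
      push_neg at hno
      exact hxZ ((hZ x).mpr ⟨hxX, hno⟩)
    choose φ hφF hφne using hex
    set g : MvPolynomial (Fin s) K :=
      ∑ x ∈ (X \ Z).attach,
        (C (eval x.1 h * (eval x.1 (φ x.1 x.2))⁻¹) * indicatorPoly X x.1) * φ x.1 x.2 with hg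
    have hgspan : g ∈ Ideal.span (F : Set (MvPolynomial (Fin s) K)) := by
      apply Ideal.sum_mem
      intro x _
      exact Ideal.mul_mem_left _ _ (Ideal.subset_span (hφF x.1 x.2))
    have hevalg : ∀ y : Fin s → K, eval y g =
        ∑ x ∈ (X \ Z).attach,
          (eval x.1 h * (eval x.1 (φ x.1 x.2))⁻¹) * eval y (indicatorPoly X x.1) *
            eval y (φ x.1 x.2) := by
      intro y
      rw [hg, map_sum]
      apply Finset.sum_congr rfl
      intro x _
      rw [map_mul, map_mul, eval_C]
    have hhg : h - g ∈ affVanishingIdeal (X : Set (Fin s → K)) := by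
      intro y hy
      rw [map_sub]
      by_cases hyZ : y ∈ Z
      · have h1 : eval y h = 0 := hh y hyZ
        have h2 : eval y g = 0 := by
          rw [hevalg]
          apply Finset.sum_eq_zero
          intro x _
          have hyx : y ≠ x.1 := by
            intro hxy
            exact (Finset.mem_sdiff.mp x.2).2 (hxy ▸ hyZ)
          rw [eval_indicatorPoly_other hy hyx]
          ring
        rw [h1, h2, sub_zero]
      · have hyXZ : y ∈ X \ Z := Finset.mem_sdiff.mpr ⟨hy, hyZ⟩
        have h2 : eval y g = eval y h := by
          rw [hevalg]
          rw [Finset.sum_eq_single (⟨y, hyXZ⟩ : { x // x ∈ X \ Z })]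
          · simp only
            rw [eval_indicatorPoly_self]
            field_simp [hφne y hyXZ]
          · intro x _ hx
            have hyx : y ≠ x.1 := by
              intro hxy
              exact hx (Subtype.ext hxy.symm)
            rw [eval_indicatorPoly_other hy hyx]
            ring
          · intro hmem
            exact absurd (Finset.mem_attach _ _) hmem
        rw [h2, sub_self]
    have : h = (h - g) + g := by ring
    rw [this]
    exact Submodule.add_mem _ (Submodule.mem_sup_left hhg) (Submodule.mem_sup_right hgspan)

end AuxZ
section AuxCode

variable {K : Type*} [Field K] {s : ℕ}

open MvPolynomial
open scoped MonomialOrder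

lemma codeSupport_span_image (X : Finset (Fin s → K)) (F : Finset (MvPolynomial (Fin s) K)) :
    codeSupport (Submodule.span K (evalMap X '' (F : Set (MvPolynomial (Fin s) K)))) =
      {i : {x // x ∈ X} | ∃ f ∈ F, eval i.1 f ≠ 0} := by
  ext i
  constructor
  · rintro ⟨v, hv, hvi⟩
    by_contra hno
    simp only [Set.mem_setOf_eq] at hno
    push_neg at hno
    apply hvi
    have hle : Submodule.span K (evalMap X '' (F : Set (MvPolynomial (Fin s) K))) ≤
        LinearMap.ker (LinearMap.proj (R := K) (φ := fun _ : {x // x ∈ X} => K) i) := by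
      rw [Submodule.span_le]
      rintro w ⟨f, hf, rfl⟩
      show evalMap X f i = 0
      exact hno f hf
    exact hle hv
  · rintro ⟨f, hf, hne⟩
    exact ⟨evalMap X f, Submodule.subset_span ⟨f, hf, rfl⟩, hne⟩

open scoped Classical in
lemma ncard_support_add_card (X Z : Finset (Fin s → K)) (F : Finset (MvPolynomial (Fin s) K))
    (hZ : ∀ x, x ∈ Z ↔ x ∈ X ∧ ∀ f ∈ F, eval x f = 0) :
    ({i : {x // x ∈ X} | ∃ f ∈ F, eval i.1 f ≠ 0}).ncard + Z.card = X.card := by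
  set P : {x // x ∈ X} → Prop := fun i => ∀ f ∈ F, eval i.1 f = 0 with hP
  have hset : {i : {x // x ∈ X} | ∃ f ∈ F, eval i.1 f ≠ 0} =
      ↑(Finset.univ.filter fun i => ¬ P i) := by
    ext i
    simp only [Set.mem_setOf_eq, Finset.coe_filter, Finset.mem_univ, true_and, hP]
    push_neg
    rfl
  rw [hset, Set.ncard_coe_finset]
  have hcZ : (Finset.univ.filter P).card = Z.card := by
    apply Finset.card_bij' (fun i _ => i.1) (fun z hz => ⟨z, ((hZ z).mp hz).1⟩)
    · intro i _
      rfl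
    · intro z _
      rfl
    · intro i hi
      exact (hZ i.1).mpr ⟨i.2, (Finset.mem_filter.mp hi).2⟩
    · intro z hz
      simp only [Finset.mem_filter, Finset.mem_univ, true_and, hP]
      exact ((hZ z).mp hz).2
  have := Finset.card_filter_add_card_filter_not (s := Finset.univ) (p := P)
  rw [hcZ] at this
  rw [Finset.card_univ, Fintype.card_coe] at this
  omega

lemma finrank_span_evalImage (m : MonomialOrder (Fin s)) (X : Finset (Fin s → K))
    (F : Finset (MvPolynomial (Fin s) K))
    (hmem : ∀ f ∈ F, f ∈ stdSpan m (affVanishingIdeal (X : Set (Fin s → K))) ∧ f ≠ 0)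
    (hdist : ∀ f ∈ F, ∀ g ∈ F, leadExp m f = leadExp m g → f = g) :
    Module.finrank K
      (Submodule.span K (evalMap X '' (F : Set (MvPolynomial (Fin s) K)))) = F.card := by
  classical
  set v : {f // f ∈ F} → MvPolynomial (Fin s) K := fun f => f.1 with hv
  have hli : LinearIndependent K v :=
    linearIndependent_of_distinct_leadExp m F (fun f hf => (hmem f hf).2) hdist
  have hrange : Set.range v = (F : Set (MvPolynomial (Fin s) K)) := Subtype.range_coe
  have hsub : Submodule.span K (Set.range v) ≤
      stdSpan m (affVanishingIdeal (X : Set (Fin s → K))) := by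
    rw [Submodule.span_le, hrange]
    intro f hf
    exact (hmem f hf).1
  have hdisj : Disjoint (Submodule.span K (Set.range v)) (LinearMap.ker (evalMap X)) :=
    Disjoint.mono_left hsub (stdSpan_disjoint_ker m X)
  have hli2 : LinearIndependent K (evalMap X ∘ v) := hli.map hdisj
  have := finrank_span_eq_card hli2
  rw [Set.range_comp, hrange] at this
  rw [this, Fintype.card_coe]

lemma exists_subcode (r : ℕ) {ι : Type*} [Fintype ι] (C : Submodule K (ι → K))
    (hr : r ≤ Module.finrank K C) :
    ∃ D : Submodule K (ι → K), D ≤ C ∧ Module.finrank K D = r := by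
  classical
  haveI : FiniteDimensional K C := FiniteDimensional.finiteDimensional_submodule C
  set b := Module.finBasis K C with hb
  set v : Fin r → (ι → K) := fun i => (b (Fin.castLE hr i) : ι → K) with hv
  have hli : LinearIndependent K v := by
    have h1 : LinearIndependent K (fun i : Fin (Module.finrank K C) => ((b i : C) : ι → K)) :=
      b.linearIndependent.map' C.subtype (Submodule.ker_subtype C)
    exact h1.comp (Fin.castLE hr) (Fin.castLE_injective hr)
  refine ⟨Submodule.span K (Set.range v), ?_, ?_⟩
  · rw [Submodule.span_le]
    rintro w ⟨i, rfl⟩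
    exact (b (Fin.castLE hr i)).2
  · rw [finrank_span_eq_card hli, Fintype.card_fin]

end AuxCode
/-- Theorem (degree formula for the generalized Hamming weights of a standard
evaluation code). -/
theorem ghw_standard_evaluation_code [Fintype K] (X : Finset (Fin s → K))
    (m : MonomialOrder (Fin s)) (L : Submodule K (MvPolynomial (Fin s) K))
    (hL : L ≤ stdSpan m (affVanishingIdeal (X : Set (Fin s → K))))
    (r : ℕ) (hr1 : 1 ≤ r) (hr2 : r ≤ Module.finrank K (↥(L.map (evalMap X)))) :
    ghw (L.map (evalMap X)) r =
      adeg (affVanishingIdeal (X : Set (Fin s → K))) -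
        sSup { n | ∃ F ∈ LprecSet m L r,
          n = adeg (affVanishingIdeal (X : Set (Fin s → K)) ⊔
                Ideal.span (F : Set (MvPolynomial (Fin s) K))) } := by
  classical
  set I : Ideal (MvPolynomial (Fin s) K) := affVanishingIdeal (X : Set (Fin s → K)) with hIdef
  set C : Submodule K ({x // x ∈ X} → K) := L.map (evalMap X) with hCdef
  set B : Set ℕ := { n | ∃ F ∈ LprecSet m L r,
      n = adeg (I ⊔ Ideal.span (F : Set (MvPolynomial (Fin s) K))) } with hBdef
  set A : Set ℕ := { n | ∃ D : Submodule K ({x // x ∈ X} → K),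
      D ≤ C ∧ Module.finrank K (↥D) = r ∧ (codeSupport D).ncard = n } with hAdef
  -- the key computation attached to each F in the family
  have key : ∀ F ∈ LprecSet m L r,
      Submodule.span K (evalMap X '' (F : Set (MvPolynomial (Fin s) K))) ≤ C ∧
      Module.finrank K
        (↥(Submodule.span K (evalMap X '' (F : Set (MvPolynomial (Fin s) K))))) = r ∧
      (codeSupport (Submodule.span K (evalMap X '' (F : Set (MvPolynomial (Fin s) K))))).ncard
        + adeg (I ⊔ Ideal.span (F : Set (MvPolynomial (Fin s) K))) = adeg I := by
    rintro F ⟨hcard, hmem, hdist⟩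
    set Z : Finset (Fin s → K) := X.filter (fun x => ∀ f ∈ F, eval x f = 0) with hZdef
    have hZ : ∀ x, x ∈ Z ↔ x ∈ X ∧ ∀ f ∈ F, eval x f = 0 := by
      intro x
      rw [hZdef, Finset.mem_filter]
    refine ⟨?_, ?_, ?_⟩
    · rw [Submodule.span_le]
      rintro w ⟨f, hf, rfl⟩
      exact Submodule.mem_map.mpr ⟨f, (hmem f hf).1, rfl⟩
    · rw [finrank_span_evalImage m X F
        (fun f hf => ⟨hL (hmem f hf).1, (hmem f hf).2.1⟩) hdist, hcard]
    · rw [hIdef, sup_span_eq_vanishing X Z F hZ, adeg_affVanishingIdeal,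
        adeg_affVanishingIdeal, codeSupport_span_image]
      exact ncard_support_add_card X Z F hZ
  -- direction A : every element of `A` comes from some `F`
  have dirA : ∀ n ∈ A, ∃ b ∈ B, b ≤ adeg I ∧ n = adeg I - b := by
    rintro n ⟨D, hDC, hDrk, hDn⟩
    set W : Submodule K (MvPolynomial (Fin s) K) :=
      Submodule.comap (evalMap X) D ⊓ L with hW
    have hWL : W ≤ L := inf_le_right
    have hmap : W.map (evalMap X) = D := by
      apply le_antisymm
      · rw [Submodule.map_le_iff_le_comap]
        exact inf_le_left
      · intro d hd
        obtain ⟨f, hfL, hfd⟩ := Submodule.mem_map.mp (hDC hd)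
        refine Submodule.mem_map.mpr ⟨f, Submodule.mem_inf.mpr ⟨?_, hfL⟩, hfd⟩
        show evalMap X f ∈ D
        rw [hfd]
        exact hd
    set ψ : ↥W →ₗ[K] ({x // x ∈ X} → K) := (evalMap X).domRestrict W with hψ
    have hker : LinearMap.ker ψ = ⊥ := by
      rw [LinearMap.ker_eq_bot']
      intro w hw
      have h1 : (w : MvPolynomial (Fin s) K) ∈ LinearMap.ker (evalMap X) := hw
      have h2 : (w : MvPolynomial (Fin s) K) ∈ stdSpan m I := hL (hWL w.2)
      have h3 := Submodule.disjoint_def.mp (stdSpan_disjoint_ker m X) _ h2 h1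
      exact Subtype.ext h3
    have hrange : LinearMap.range ψ = D := by
      rw [← hmap]
      ext d
      constructor
      · rintro ⟨w, rfl⟩
        exact Submodule.mem_map.mpr ⟨w.1, w.2, rfl⟩
      · rintro hd
        obtain ⟨f, hf, hfd⟩ := Submodule.mem_map.mp hd
        exact ⟨⟨f, hf⟩, hfd⟩
    let e : (↥W) ≃ₗ[K] (↥D) :=
      (LinearEquiv.ofInjective ψ (LinearMap.ker_eq_bot.mp hker)).trans
        (LinearEquiv.ofEq _ _ hrange)
    haveI : FiniteDimensional K (↥D) := FiniteDimensional.finiteDimensional_submodule D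
    haveI : FiniteDimensional K (↥W) := Module.Finite.equiv e.symm
    have hWrk : Module.finrank K (↥W) = r := by rw [e.finrank_eq, hDrk]
    obtain ⟨F, hFcard, hFmem, hFdist, hFspan⟩ := triangulate m r W inferInstance hWrk
    have hFL : F ∈ LprecSet m L r :=
      ⟨hFcard, fun f hf => ⟨hWL (hFmem f hf).1, (hFmem f hf).2⟩, hFdist⟩
    have hD : D = Submodule.span K (evalMap X '' (F : Set (MvPolynomial (Fin s) K))) := by
      rw [← hmap, ← hFspan, Submodule.map_span]
    obtain ⟨-, -, hkey⟩ := key F hFL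
    refine ⟨adeg (I ⊔ Ideal.span (F : Set (MvPolynomial (Fin s) K))), ⟨F, hFL, rfl⟩, ?_, ?_⟩
    · omega
    · rw [← hDn, hD]
      omega
  -- direction B : every `F` gives an element of `A`
  have dirB : ∀ b ∈ B, b ≤ adeg I ∧ (adeg I - b) ∈ A := by
    rintro b ⟨F, hFL, rfl⟩
    obtain ⟨h1, h2, h3⟩ := key F hFL
    constructor
    · omega
    · exact ⟨Submodule.span K (evalMap X '' (F : Set (MvPolynomial (Fin s) K))), h1, h2, by omega⟩
  -- nonemptiness
  have hAne : A.Nonempty := by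
    obtain ⟨D, hDC, hDrk⟩ := exists_subcode r C hr2
    exact ⟨(codeSupport D).ncard, D, hDC, hDrk, rfl⟩
  obtain ⟨a, haA⟩ := hAne
  obtain ⟨b0, hb0B, hb0le, hab0⟩ := dirA a haA
  have hBne : B.Nonempty := ⟨b0, hb0B⟩
  have hBbdd : BddAbove B := ⟨adeg I, fun b hb => (dirB b hb).1⟩
  have hsSupB : sSup B ∈ B := Nat.sSup_mem hBne hBbdd
  -- conclude
  show sInf A = adeg I - sSup B
  apply le_antisymm
  · exact Nat.sInf_le (dirB _ hsSupB).2
  · apply le_csInf ⟨a, haA⟩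
    intro n hn
    obtain ⟨b, hbB, hble, rfl⟩ := dirA n hn
    have : b ≤ sSup B := le_csSup hBbdd hbB
    omega
end

section
/- Let $\mathcal{C}_\mathcal{P}(d)$ be the toric code of degree $d$ over the $d$-th hypersimplex of $\mathbb{R}^s$ ($s \ge 2$, $1 \le d \le s$) and let $\delta(\mathcal{C}_\mathcal{P}(d))$ be its minimum distance. Then $\delta(\mathcal{C}_\mathcal{P}(d)) = (q-2)^d(q-1)^{s-d}$ if $d \le s/2$ and $q \ge 3$; $\delta(\mathcal{C}_\mathcal{P}(d)) = (q-2)^{s-d}(q-1)^{d}$ if $s/2 < d < s$ and $q \ge 3$; $\delta(\mathcal{C}_\mathcal{P}(d)) = (q-1)^{s}$ if $d = s$; and $\delta(\mathcal{C}_\mathcal{P}(d)) = 1$ if $q = 2$. -/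
open MvPolynomial
open scoped MonomialOrder

variable {K : Type*} [Field K] {s : ℕ}

/-! A codeword is the vector of values on `(Kˣ)^s` of a squarefree polynomial `f` of degree `d`.
Writing `f = f₀ + t₁ f₁`, the weight of `f` is the sum over `u ∈ Kˣ` of the weights of `f₀ + u f₁`:
either none of these polynomials is zero, or one of them is and all others are multiples of `f₁`,
which has degree one less. Induction on `s` bounds the weight of a nonzero `f` of degree `≤ d`
below by `(q-2)^d (q-1)^(s-d)`; substituting `tᵢ ↦ tᵢ⁻¹` and multiplying by `t₁ ⋯ t_s` trades
degree `≥ d` for degree `≤ s - d`. The bounds are attained by `∏_{i<d} (t_{2i} - t_{2i+1})`, by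
its image under that substitution, and, when `d = s` or `q = 2`, by a monomial. -/

open Finset

lemma ncard_setOf_fin_cons {α : Type*} [Fintype α] (P : (Fin (s + 1) → α) → Prop) :
    {x | P x}.ncard = ∑ u, {y : Fin s → α | P (Fin.cons u y)}.ncard := by
  classical
  simp only [Set.ncard_eq_toFinset_card', Set.toFinset_ofPred, card_filter]
  rw [← (Fin.consEquiv fun _ => α).sum_comp, Fintype.sum_prod_type]
  rfl

lemma Fintype.sum_eq_card_sub_one_mul {α : Type*} [Fintype α] [DecidableEq α] {f : α → ℕ}
    (u : α) {t : ℕ} (hu : f u = 0) (h : ∀ v, v ≠ u → f v = t) :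
    ∑ v, f v = (Fintype.card α - 1) * t := by
  rw [← add_sum_erase _ _ (mem_univ u), hu, zero_add,
    sum_const_nat fun v hv => h v (ne_of_mem_erase hv), card_erase_of_mem (mem_univ u), card_univ]

lemma sub_one_pow_mul_pow_le (Q : ℕ) {d n : ℕ} (hd : d ≤ n + 1) :
    (Q - 1) ^ d * Q ^ (n + 1 - d) ≤ Q * ((Q - 1) ^ min d n * Q ^ (n - min d n)) := by
  rcases le_or_gt d n with h | h
  · rw [min_eq_left h, show n + 1 - d = n - d + 1 by omega, pow_succ]
    exact le_of_eq (by ring)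
  · obtain rfl : d = n + 1 := by omega
    rw [min_eq_right n.le_succ, pow_succ]
    simpa [mul_comm] using Nat.mul_le_mul_left ((Q - 1) ^ n) (Nat.sub_le Q 1)

def boolDegree (a : Fin s → Bool) : ℕ := ∑ i, (a i).toNat

lemma boolDegree_cons (b : Bool) (a : Fin s → Bool) :
    boolDegree (Fin.cons b a : Fin (s + 1) → Bool) = b.toNat + boolDegree a := by
  simp [boolDegree, Fin.sum_univ_succ]

lemma boolDegree_le (a : Fin s → Bool) : boolDegree a ≤ s :=
  (sum_le_sum fun i (_ : i ∈ univ) => Bool.toNat_le (a i)).trans_eq (by simp)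

lemma boolDegree_not (a : Fin s → Bool) : boolDegree (fun i => !a i) = s - boolDegree a := by
  have : boolDegree (fun i => !a i) + boolDegree a = s := by
    simpa [boolDegree, ← sum_add_distrib] using
      sum_congr rfl fun i (_ : i ∈ univ) => show (!a i).toNat + (a i).toNat = 1 by
        cases a i <;> rfl
  omega

lemma exists_boolDegree_eq {d : ℕ} (hd : d ≤ s) : ∃ a : Fin s → Bool, boolDegree a = d := by
  obtain ⟨t, -, ht⟩ := exists_subset_card_eq (s := (univ : Finset (Fin s))) (by simpa using hd)
  exact ⟨fun i => decide (i ∈ t), by simp [boolDegree, Bool.toNat, Bool.cond_decide, ht]⟩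

/-- A squarefree polynomial is encoded by its coefficient function `c` on exponent vectors
`a : Fin s → Bool`; this is its value at a point of the torus `(Kˣ)^s`. -/
def sqfreeEval (x : Fin s → Kˣ) : ((Fin s → Bool) → K) →ₗ[K] K where
  toFun c := ∑ a, c a * ∏ i, (x i : K) ^ (a i).toNat
  map_add' c c' := by simp [add_mul, sum_add_distrib]
  map_smul' r c := by simp [mul_sum, mul_assoc]

lemma sqfreeEval_apply (x : Fin s → Kˣ) (c : (Fin s → Bool) → K) :
    sqfreeEval x c = ∑ a, c a * ∏ i, (x i : K) ^ (a i).toNat := rfl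

lemma sqfreeEval_cons (u : Kˣ) (y : Fin s → Kˣ) (c : (Fin (s + 1) → Bool) → K) :
    sqfreeEval (Fin.cons u y) c = sqfreeEval y (fun a => c (Fin.cons false a)) +
      u * sqfreeEval y (fun a => c (Fin.cons true a)) := by
  rw [sqfreeEval_apply, ← (Fin.consEquiv fun _ => Bool).sum_comp, Fintype.sum_prod_type,
    Fintype.sum_bool]
  simp [sqfreeEval_apply, Fin.consEquiv, Fin.prod_univ_succ, mul_sum, mul_left_comm,
    add_comm]

lemma sqfreeEval_inv_not (x : Fin s → Kˣ) (c : (Fin s → Bool) → K) :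
    sqfreeEval x⁻¹ (fun a => c fun i => !a i) * ∏ i, (x i : K) = sqfreeEval x c := by
  rw [sqfreeEval_apply, sqfreeEval_apply, sum_mul,
    ← (Equiv.piCongrRight fun _ => Equiv.boolNot).sum_comp]
  refine sum_congr rfl fun a _ => ?_
  simp only [Equiv.piCongrRight_apply, Pi.map_apply, Equiv.boolNot_apply, Bool.not_not,
    Pi.inv_apply, mul_assoc, ← prod_mul_distrib]
  congr 1
  refine prod_congr rfl fun i _ => ?_
  cases a i <;> simp

section TorusWeight

noncomputable def torusWeight (c : (Fin s → Bool) → K) : ℕ :=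
  {x : Fin s → Kˣ | sqfreeEval x c ≠ 0}.ncard

lemma torusWeight_smul {r : K} (hr : r ≠ 0) (c : (Fin s → Bool) → K) :
    torusWeight (r • c) = torusWeight c := by
  simp [torusWeight, hr]

lemma torusWeight_not (c : (Fin s → Bool) → K) :
    torusWeight (fun a => c fun i => !a i) = torusWeight c := by
  rw [torusWeight, torusWeight, ← Set.ncard_inv]
  congr 1
  ext x
  rw [Set.mem_inv, Set.mem_ofPred_eq, Set.mem_ofPred_eq, ← sqfreeEval_inv_not x,
    mul_ne_zero_iff_right (prod_ne_zero_iff.mpr fun i _ => (x i).ne_zero)]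

lemma eq_zero_of_cons_eq_zero {c : (Fin (s + 1) → Bool) → K}
    (h₀ : (fun a => c (Fin.cons false a)) = 0) (h₁ : (fun a => c (Fin.cons true a)) = 0) :
    c = 0 := by
  funext a
  induction a using Fin.consCases with
  | cons b a => cases b; exacts [congrFun h₀ a, congrFun h₁ a]

variable [Fintype K] [DecidableEq K]

lemma torusWeight_cons (c : (Fin (s + 1) → Bool) → K) :
    torusWeight c = ∑ u : Kˣ, torusWeight
      ((fun a => c (Fin.cons false a)) + (u : K) • fun a => c (Fin.cons true a)) := by
  simp [torusWeight, ncard_setOf_fin_cons, sqfreeEval_cons]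

lemma torusWeight_cons_of_add_smul_eq_zero (c : (Fin (s + 1) → Bool) → K) (u₀ : Kˣ)
    (h : (fun a => c (Fin.cons false a)) + (u₀ : K) • (fun a => c (Fin.cons true a)) = 0) :
    torusWeight c = (Fintype.card Kˣ - 1) * torusWeight fun a => c (Fin.cons true a) := by
  rw [torusWeight_cons, eq_neg_of_add_eq_zero_left h]
  refine Fintype.sum_eq_card_sub_one_mul u₀ (by simp [torusWeight]) fun u hu => ?_
  rw [neg_add_eq_sub, ← sub_smul]
  exact torusWeight_smul (sub_ne_zero.mpr (Units.val_injective.ne hu)) _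

lemma exists_torusWeight_eq_pow {d : ℕ} (hd : d ≤ s) :
    ∃ c : (Fin s → Bool) → K, (∀ a, c a ≠ 0 → boolDegree a = d) ∧
      torusWeight c = Fintype.card Kˣ ^ s := by
  obtain ⟨a, ha⟩ := exists_boolDegree_eq hd
  refine ⟨Pi.single a 1, fun b hb => ?_, ?_⟩
  · obtain rfl : b = a := by simpa [Pi.single_apply] using hb
    exact ha
  have hval (x : Fin s → Kˣ) : sqfreeEval x (Pi.single a 1) = ∏ i, (x i : K) ^ (a i).toNat := by
    simp [sqfreeEval_apply, Pi.single_apply]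
  have huniv : {x : Fin s → Kˣ | sqfreeEval x (Pi.single a 1) ≠ 0} = Set.univ :=
    Set.eq_univ_of_forall fun x => by
      rw [Set.mem_ofPred_eq, hval]
      exact prod_ne_zero_iff.mpr fun i _ => pow_ne_zero _ (x i).ne_zero
  rw [torusWeight, huniv, Set.ncard_univ, Nat.card_eq_fintype_card, Fintype.card_fun,
    Fintype.card_fin]

theorem le_torusWeight_of_boolDegree_le {c : (Fin s → Bool) → K} {d : ℕ} (hd : d ≤ s)
    (hc : c ≠ 0) (hdeg : ∀ a, c a ≠ 0 → boolDegree a ≤ d) :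
    (Fintype.card Kˣ - 1) ^ d * Fintype.card Kˣ ^ (s - d) ≤ torusWeight c := by
  induction s generalizing d with
  | zero =>
    obtain rfl : d = 0 := by omega
    obtain ⟨a, ha⟩ := Function.ne_iff.mp hc
    have : sqfreeEval isEmptyElim c ≠ 0 := by
      simpa [sqfreeEval_apply, Subsingleton.elim _ a] using ha
    rw [pow_zero, Nat.sub_zero, pow_zero, one_mul]
    exact (Set.ncard_pos (Set.toFinite _)).mpr ⟨_, this⟩
  | succ n ih =>
    set Q := Fintype.card Kˣ
    set c₀ : (Fin n → Bool) → K := fun a => c (Fin.cons false a)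
    set c₁ : (Fin n → Bool) → K := fun a => c (Fin.cons true a)
    have hdeg₀ (a) (ha : c₀ a ≠ 0) : boolDegree a ≤ d := by
      simpa [boolDegree_cons] using hdeg _ ha
    have hdeg₁ (a) (ha : c₁ a ≠ 0) : boolDegree a + 1 ≤ d := by
      simpa [boolDegree_cons, add_comm] using hdeg _ ha
    rcases em (∃ u₀ : Kˣ, c₀ + (u₀ : K) • c₁ = 0) with ⟨u₀, hu₀⟩ | hne
    · have hc₁ : c₁ ≠ 0 := fun h => hc (eq_zero_of_cons_eq_zero (by simpa [h] using hu₀) h)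
      obtain ⟨a, ha⟩ := Function.ne_iff.mp hc₁
      have hd₁ := hdeg₁ a ha
      rw [torusWeight_cons_of_add_smul_eq_zero c u₀ hu₀]
      calc (Q - 1) ^ d * Q ^ (n + 1 - d)
          = (Q - 1) * ((Q - 1) ^ (d - 1) * Q ^ (n - (d - 1))) := by
            rw [← mul_assoc, ← pow_succ']
            congr 2 <;> omega
        _ ≤ (Q - 1) * torusWeight c₁ :=
            Nat.mul_le_mul_left _ (ih (by omega) hc₁ fun a ha => by have := hdeg₁ a ha; omega)
    · have key (u : Kˣ) :
          (Q - 1) ^ min d n * Q ^ (n - min d n) ≤ torusWeight (c₀ + (u : K) • c₁) := by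
        refine ih (min_le_right _ _) (fun h => hne ⟨u, h⟩) fun a ha => le_min ?_ (boolDegree_le a)
        by_cases h₀ : c₀ a = 0
        · have := hdeg₁ a fun h₁ => ha (by simp [h₀, h₁])
          omega
        · exact hdeg₀ a h₀
      calc (Q - 1) ^ d * Q ^ (n + 1 - d) ≤ Q * ((Q - 1) ^ min d n * Q ^ (n - min d n)) :=
            sub_one_pow_mul_pow_le Q hd
        _ ≤ torusWeight c := by
            rw [torusWeight_cons]
            simpa using card_nsmul_le_sum univ _ _ fun u _ => key u

theorem le_torusWeight_of_le_boolDegree {c : (Fin s → Bool) → K} {d : ℕ} (hd : d ≤ s)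
    (hc : c ≠ 0) (hdeg : ∀ a, c a ≠ 0 → d ≤ boolDegree a) :
    (Fintype.card Kˣ - 1) ^ (s - d) * Fintype.card Kˣ ^ d ≤ torusWeight c := by
  have hc' : (fun a : Fin s → Bool => c fun i => !a i) ≠ 0 := fun h =>
    hc (funext fun a => by simpa using congrFun h fun i => !a i)
  rw [← torusWeight_not]
  simpa [Nat.sub_sub_self hd] using le_torusWeight_of_boolDegree_le (Nat.sub_le s d) hc'
    fun a ha => by
      have := boolDegree_not a ▸ hdeg _ ha
      have := boolDegree_le a
      omega

lemma torusWeight_eq_of_sqfreeEval_cons_cons {c : (Fin (s + 2) → Bool) → K}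
    {c' : (Fin s → Bool) → K}
    (h : ∀ u v y, sqfreeEval (Fin.cons u (Fin.cons v y)) c = ((u : K) - v) * sqfreeEval y c') :
    torusWeight c = Fintype.card Kˣ * (Fintype.card Kˣ - 1) * torusWeight c' := by
  have hinner (u : Kˣ) : ∑ v : Kˣ, {y | sqfreeEval (Fin.cons u (Fin.cons v y)) c ≠ 0}.ncard =
      (Fintype.card Kˣ - 1) * torusWeight c' :=
    Fintype.sum_eq_card_sub_one_mul u (by simp [h]) fun v hv => by
      simp [h, torusWeight, sub_ne_zero, Units.val_injective.ne hv.symm]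
  calc torusWeight c = ∑ _u : Kˣ, (Fintype.card Kˣ - 1) * torusWeight c' := by
        rw [torusWeight, ncard_setOf_fin_cons]
        exact sum_congr rfl fun u _ => by
          rw [ncard_setOf_fin_cons fun y => sqfreeEval (Fin.cons u y) c ≠ 0, hinner u]
    _ = _ := by rw [sum_const, card_univ, smul_eq_mul, mul_assoc]

/-- The witness is `∏_{i < e} (t_{2i} - t_{2i+1})`, which vanishes exactly where two paired
coordinates agree. -/
lemma exists_torusWeight_eq_of_two_mul_le {e : ℕ} (he : 2 * e ≤ s) :
    ∃ c : (Fin s → Bool) → K, (∀ a, c a ≠ 0 → boolDegree a = e) ∧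
      torusWeight c = (Fintype.card Kˣ - 1) ^ e * Fintype.card Kˣ ^ (s - e) := by
  induction e generalizing s with
  | zero =>
    simpa using exists_torusWeight_eq_pow (K := K) (Nat.zero_le s)
  | succ e ih =>
    obtain ⟨n, rfl⟩ : ∃ n, s = n + 2 := ⟨s - 2, by omega⟩
    obtain ⟨c', hdeg, hw⟩ := ih (s := n) (by omega)
    set c : (Fin (n + 2) → Bool) → K :=
      fun a => ((a 0).toNat - (a 1).toNat : K) * c' (Fin.tail (Fin.tail a))
    have hc (b b' : Bool) :
        (fun a => c (Fin.cons b (Fin.cons b' a))) = (b.toNat - b'.toNat : K) • c' := by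
      funext a
      simp [c]
    refine ⟨c, fun a ha => ?_, ?_⟩
    · induction a using Fin.consCases with
      | cons b a =>
        induction a using Fin.consCases with
        | cons b' a =>
          have hca : c (Fin.cons b (Fin.cons b' a)) = (b.toNat - b'.toNat : K) * c' a :=
            congrFun (hc b b') a
          rw [hca] at ha
          rw [boolDegree_cons, boolDegree_cons, hdeg a (right_ne_zero_of_mul ha)]
          cases b <;> cases b' <;> simp at ha ⊢ <;> omega
    · rw [torusWeight_eq_of_sqfreeEval_cons_cons (c' := c'), hw]
      · rw [show n + 2 - (e + 1) = n - e + 1 by omega]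
        ring
      · intro u v y
        simp only [sqfreeEval_cons]
        rw [hc, hc, hc, hc]
        simp only [map_smul, smul_eq_mul, Bool.toNat_false, Bool.toNat_true, Nat.cast_zero,
          Nat.cast_one]
        ring

lemma exists_torusWeight_eq_of_le_two_mul {d : ℕ} (hd : d ≤ s) (h : s ≤ 2 * d) :
    ∃ c : (Fin s → Bool) → K, (∀ a, c a ≠ 0 → boolDegree a = d) ∧
      torusWeight c = (Fintype.card Kˣ - 1) ^ (s - d) * Fintype.card Kˣ ^ d := by
  obtain ⟨c, hc, hw⟩ := exists_torusWeight_eq_of_two_mul_le (K := K) (s := s) (e := s - d)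
    (by omega)
  refine ⟨fun a => c fun i => !a i, fun a ha => ?_,
    by rw [torusWeight_not, hw, Nat.sub_sub_self hd]⟩
  have := boolDegree_not a ▸ hc _ ha
  have := boolDegree_le a
  omega

end TorusWeight

section ToricCode

noncomputable def boolExp (a : Fin s → Bool) : Fin s →₀ ℕ :=
  Finsupp.equivFunOnFinite.symm fun i => (a i).toNat

noncomputable def sqfreePoly (c : (Fin s → Bool) → K) : MvPolynomial (Fin s) K :=
  ∑ a, c a • monomial (boolExp a) 1

lemma degree_boolExp (a : Fin s → Bool) : (boolExp a).degree = boolDegree a :=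
  Finsupp.degree_eq_sum _

lemma sqfreeMonomials_eq_image (d : ℕ) :
    sqfreeMonomials K s d =
      (fun a => monomial (boolExp a) 1) ''
        ↑(univ.filter fun a : Fin s → Bool => boolDegree a = d) := by
  ext g
  simp only [sqfreeMonomials, Set.mem_ofPred_eq, coe_filter, Set.mem_image]
  constructor
  · rintro ⟨b, hb, rfl, rfl⟩
    have hexp : boolExp (fun i => decide (b i = 1)) = b := by
      ext i
      rcases Nat.le_one_iff_eq_zero_or_eq_one.mp (hb i) with h | h <;> simp [boolExp, h]
    exact ⟨fun i => decide (b i = 1), by simp [← degree_boolExp, hexp], by rw [hexp]⟩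
  · rintro ⟨a, ha, rfl⟩
    exact ⟨boolExp a, fun i => Bool.toNat_le (a i), by simpa [degree_boolExp] using ha, rfl⟩

lemma mem_span_sqfreeMonomials_iff {d : ℕ} {f : MvPolynomial (Fin s) K} :
    f ∈ Submodule.span K (sqfreeMonomials K s d) ↔
      ∃ c : (Fin s → Bool) → K, (∀ a, c a ≠ 0 → boolDegree a = d) ∧ sqfreePoly c = f := by
  rw [sqfreeMonomials_eq_image, Submodule.mem_span_image_finset_iff_exists_fun']
  constructor
  · rintro ⟨c, rfl⟩
    refine ⟨fun a => if boolDegree a = d then c a else 0, fun a ha => ?_, ?_⟩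
    · by_contra h
      simp [h] at ha
    · simp [sqfreePoly, sum_filter, ite_smul]
  · rintro ⟨c, hc, rfl⟩
    exact ⟨c, sum_filter_of_ne fun a _ ha => hc a fun h => by simp [h] at ha⟩

lemma eval_sqfreePoly (x : Fin s → Kˣ) (c : (Fin s → Bool) → K) :
    eval (fun i => (x i : K)) (sqfreePoly c) = sqfreeEval x c := by
  simp [sqfreePoly, sqfreeEval_apply, eval_monomial, Finsupp.prod_fintype, boolExp]

variable [Fintype K]

lemma mem_torus {x : Fin s → K} : x ∈ torus K s ↔ ∀ i, x i ≠ 0 := by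
  classical
  simp [torus]

noncomputable def torusEquiv (K : Type*) [Field K] [Fintype K] (s : ℕ) :
    (Fin s → Kˣ) ≃ torus K s where
  toFun x := ⟨fun i => (x i : K), mem_torus.mpr fun i => (x i).ne_zero⟩
  invFun p i := Units.mk0 (p.1 i) (mem_torus.mp p.2 i)
  left_inv _ := funext fun _ => Units.ext rfl
  right_inv _ := rfl

lemma ncard_evalMap_sqfreePoly_ne_zero (c : (Fin s → Bool) → K) :
    {p | evalMap (torus K s) (sqfreePoly c) p ≠ 0}.ncard = torusWeight c := by
  rw [torusWeight, ← Nat.card_coe_set_eq, ← Nat.card_coe_set_eq]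
  refine Nat.card_congr ((torusEquiv K s).subtypeEquiv fun x => ?_).symm
  show sqfreeEval x c ≠ 0 ↔ eval (fun i => (x i : K)) (sqfreePoly c) ≠ 0
  rw [eval_sqfreePoly]

theorem minDist_toricCode_eq {d N : ℕ} (hN : 0 < N)
    (hwit : ∃ c : (Fin s → Bool) → K, (∀ a, c a ≠ 0 → boolDegree a = d) ∧ torusWeight c = N)
    (hlow : ∀ c : (Fin s → Bool) → K, (∀ a, c a ≠ 0 → boolDegree a = d) → c ≠ 0 →
      0 < torusWeight c → N ≤ torusWeight c) :
    minDist ((Submodule.span K (sqfreeMonomials K s d)).map (evalMap (torus K s))) = N := by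
  refine IsLeast.csInf_eq ⟨?_, ?_⟩
  · obtain ⟨c, hc, rfl⟩ := hwit
    refine ⟨_, Submodule.mem_map_of_mem (mem_span_sqfreeMonomials_iff.mpr ⟨c, hc, rfl⟩), ?_,
      ncard_evalMap_sqfreePoly_ne_zero c⟩
    intro h
    simp [← ncard_evalMap_sqfreePoly_ne_zero, h] at hN
  · rintro _ ⟨v, hv, hv0, rfl⟩
    obtain ⟨f, hf, rfl⟩ := Submodule.mem_map.mp hv
    obtain ⟨c, hc, rfl⟩ := mem_span_sqfreeMonomials_iff.mp hf
    rw [ncard_evalMap_sqfreePoly_ne_zero]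
    refine hlow c hc (by rintro rfl; simp [sqfreePoly] at hv0) ?_
    rw [← ncard_evalMap_sqfreePoly_ne_zero]
    exact (Set.ncard_pos (Set.toFinite _)).mpr (Function.ne_iff.mp hv0)

end ToricCode

theorem minDist_toric_code_hypersimplex_general (K : Type*) [Field K] [Fintype K] (s d : ℕ)
    (hds : d ≤ s) :
    (3 ≤ Fintype.card K → 2 * d ≤ s →
      minDist ((Submodule.span K (sqfreeMonomials K s d)).map (evalMap (torus K s))) =
        (Fintype.card K - 2) ^ d * (Fintype.card K - 1) ^ (s - d)) ∧
    (3 ≤ Fintype.card K → s < 2 * d → d < s →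
      minDist ((Submodule.span K (sqfreeMonomials K s d)).map (evalMap (torus K s))) =
        (Fintype.card K - 2) ^ (s - d) * (Fintype.card K - 1) ^ d) ∧
    (d = s →
      minDist ((Submodule.span K (sqfreeMonomials K s d)).map (evalMap (torus K s))) =
        (Fintype.card K - 1) ^ s) ∧
    (Fintype.card K = 2 →
      minDist ((Submodule.span K (sqfreeMonomials K s d)).map (evalMap (torus K s))) = 1) := by
  classical
  have hq : Fintype.card K - 1 = Fintype.card Kˣ := (Fintype.card_units K).symm
  have hq' : Fintype.card K - 2 = Fintype.card Kˣ - 1 := by omega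
  have hQ : 0 < Fintype.card Kˣ := Fintype.card_pos
  rw [hq, hq']
  refine ⟨fun hK h2d => ?_, fun hK h2d _ => ?_, fun hs => ?_, fun hK => ?_⟩
  · have hQ' : 0 < Fintype.card Kˣ - 1 := by omega
    refine minDist_toricCode_eq (by positivity) (exists_torusWeight_eq_of_two_mul_le h2d) ?_
    exact fun c hc hc0 _ => le_torusWeight_of_boolDegree_le hds hc0 fun a ha => (hc a ha).le
  · have hQ' : 0 < Fintype.card Kˣ - 1 := by omega
    refine minDist_toricCode_eq (by positivity) (exists_torusWeight_eq_of_le_two_mul hds h2d.le) ?_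
    exact fun c hc hc0 _ => le_torusWeight_of_le_boolDegree hds hc0 fun a ha => (hc a ha).ge
  · subst hs
    refine minDist_toricCode_eq (by positivity) (exists_torusWeight_eq_pow le_rfl) ?_
    exact fun c hc hc0 _ => by
      simpa using le_torusWeight_of_le_boolDegree le_rfl hc0 fun a ha => (hc a ha).ge
  · have hQ1 : Fintype.card Kˣ = 1 := by omega
    obtain ⟨c, hc, hw⟩ := exists_torusWeight_eq_pow (K := K) hds
    exact minDist_toricCode_eq one_pos ⟨c, hc, by rw [hw, hQ1, one_pow]⟩ fun _ _ _ h => h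

/-- Theorem (minimum distance of the toric code over the `d`-th hypersimplex). -/
theorem minDist_toric_code_hypersimplex (K : Type*) [Field K] [Fintype K] (s d : ℕ)
    (hs : 2 ≤ s) (hd1 : 1 ≤ d) (hds : d ≤ s) :
    (3 ≤ Fintype.card K → 2 * d ≤ s →
      minDist ((Submodule.span K (sqfreeMonomials K s d)).map (evalMap (torus K s))) =
        (Fintype.card K - 2) ^ d * (Fintype.card K - 1) ^ (s - d)) ∧
    (3 ≤ Fintype.card K → s < 2 * d → d < s →
      minDist ((Submodule.span K (sqfreeMonomials K s d)).map (evalMap (torus K s))) =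
        (Fintype.card K - 2) ^ (s - d) * (Fintype.card K - 1) ^ d) ∧
    (d = s →
      minDist ((Submodule.span K (sqfreeMonomials K s d)).map (evalMap (torus K s))) =
        (Fintype.card K - 1) ^ s) ∧
    (Fintype.card K = 2 →
      minDist ((Submodule.span K (sqfreeMonomials K s d)).map (evalMap (torus K s))) = 1) :=
  minDist_toric_code_hypersimplex_general K s d hds
end

section
/- Let $X$ be a finite subset of $\mathbb{A}^s = K^s$ over a field $K$, let $I(X)$ be its vanishing ideal, and let $F$ be a finite subset of $S = K[t_1,\ldots,t_s]$. Then $|V_X(F)| = \deg(S/(I(X),F))$ if $(I(X) : (F)) \neq I(X)$, and $|V_X(F)| = 0$ if $(I(X) : (F)) = I(X)$. -/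
open MvPolynomial
open scoped MonomialOrder

variable {K : Type*} [Field K] {s : ℕ}

/-- `V_X(F)`: the affine variety of `F` in `X`. -/
def VX (X : Finset (Fin s → K)) (F : Finset (MvPolynomial (Fin s) K)) : Set (Fin s → K) :=
  { x | x ∈ X ∧ ∀ f ∈ F, eval x f = 0 }

/-!
Over a finite set `X` of points, polynomials can be interpolated, so evaluation identifies
`S/I(X)` with `K^X`, and an ideal `J ⊇ I(X)` contains every polynomial it matches at each
point of `X`. At a point of `X` outside `V_X(F)` some `f ∈ F` does not vanish, and a
multiple of it takes any prescribed value there; hence `(I(X), F) = I(V_X(F))` and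
`deg(S/(I(X),F)) = dim_K K^{V_X(F)} = |V_X(F)|`. If `V_X(F)` contains a point `x`, the
indicator polynomial of `x` on `X` lies in `I(X) : (F)` but not in `I(X)`; so
`(I(X) : (F)) = I(X)` forces `V_X(F) = ∅`.
-/

namespace MvPolynomial

variable {σ K : Type*} [Field K]

lemma mem_vanishingIdeal_iff_eval {Y : Set (σ → K)} {p : MvPolynomial σ K} :
    p ∈ vanishingIdeal K Y ↔ ∀ y ∈ Y, eval y p = 0 :=
  Iff.rfl

lemma isCoprime_ker_eval {P Q : σ → K} (h : P ≠ Q) :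
    IsCoprime (RingHom.ker (eval P)) (RingHom.ker (eval Q)) := by
  obtain ⟨i, hi⟩ := Function.ne_iff.mp h
  set u : MvPolynomial σ K := C (Q i - P i)⁻¹ * (X i - C (P i))
  refine Ideal.isCoprime_iff_exists.mpr ⟨u, ?_, 1 - u, ?_, add_sub_cancel u 1⟩
  · simp [u]
  · simp [u, inv_mul_cancel₀ (sub_ne_zero.mpr hi.symm)]

/-- Interpolation is the Chinese remainder theorem for the maximal ideals of the points. -/
lemma exists_eval_eq {Y : Set (σ → K)} (hY : Y.Finite) (v : (σ → K) → K) :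
    ∃ p : MvPolynomial σ K, ∀ y ∈ Y, eval y p = v y := by
  have : Finite Y := hY
  have hcoprime :
      Pairwise (Function.onFun IsCoprime fun y : Y => RingHom.ker (eval (y : σ → K))) :=
    fun y z hyz => isCoprime_ker_eval (Subtype.coe_injective.ne hyz)
  obtain ⟨p, hp⟩ := Ideal.exists_forall_sub_mem_ideal hcoprime fun y => C (v y)
  refine ⟨p, fun y hy => ?_⟩
  simpa [sub_eq_zero] using hp ⟨y, hy⟩

lemma exists_eval_eq_indicator {Y : Set (σ → K)} (hY : Y.Finite) (x : σ → K) :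
    ∃ e : MvPolynomial σ K, eval x e = 1 ∧ ∀ y ∈ Y, y ≠ x → eval y e = 0 := by
  classical
  obtain ⟨e, he⟩ := exists_eval_eq (hY.insert x) fun y => if y = x then 1 else 0
  exact ⟨e, by simpa using he x (Set.mem_insert x Y),
    fun y hy hyx => by simpa [hyx] using he y (Set.mem_insert_of_mem x hy)⟩

noncomputable def evalOn (Y : Set (σ → K)) : MvPolynomial σ K →ₐ[K] (Y → K) :=
  AlgHom.pi fun y => aeval (y : σ → K)

@[simp]
lemma evalOn_apply (Y : Set (σ → K)) (p : MvPolynomial σ K) (y : Y) :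
    evalOn Y p y = eval (y : σ → K) p :=
  rfl

lemma evalOn_surjective {Y : Set (σ → K)} (hY : Y.Finite) :
    Function.Surjective (evalOn Y) := by
  classical
  intro v
  obtain ⟨p, hp⟩ := exists_eval_eq hY fun y => if hy : y ∈ Y then v ⟨y, hy⟩ else 0
  exact ⟨p, _root_.funext fun y => by simp [hp _ y.2]⟩

lemma ker_evalOn (Y : Set (σ → K)) : RingHom.ker (evalOn Y) = vanishingIdeal K Y := by
  ext p
  simp [RingHom.mem_ker, _root_.funext_iff]

lemma finrank_quotient_vanishingIdeal {Y : Set (σ → K)} (hY : Y.Finite) :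
    Module.finrank K (MvPolynomial σ K ⧸ vanishingIdeal K Y) = Y.ncard := by
  have : Fintype Y := hY.fintype
  rw [← ker_evalOn,
    (Ideal.quotientKerAlgEquivOfSurjective (evalOn_surjective hY)).toLinearEquiv.finrank_eq,
    Module.finrank_fintype_fun_eq_card, ← Nat.card_eq_fintype_card, Nat.card_coe_set_eq]

lemma mem_of_forall_exists_eval_eq {X : Set (σ → K)} (hX : X.Finite)
    {J : Ideal (MvPolynomial σ K)} (hJ : vanishingIdeal K X ≤ J) {g : MvPolynomial σ K}
    (h : ∀ x ∈ X, ∃ j ∈ J, eval x j = eval x g) : g ∈ J := by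
  have : Fintype X := hX.fintype
  choose j hjJ hj using fun x : X => h x x.2
  choose e he₁ he₀ using fun x : X => exists_eval_eq_indicator hX (x : σ → K)
  have hsum : ∑ x : X, e x * j x ∈ J := J.sum_mem fun x _ => J.mul_mem_left _ (hjJ x)
  have hdiff : g - ∑ x : X, e x * j x ∈ vanishingIdeal K X := by
    refine mem_vanishingIdeal_iff_eval.mpr fun y hy => ?_
    rw [map_sub, map_sum, Finset.sum_eq_single ⟨y, hy⟩]
    · rw [map_mul, he₁ ⟨y, hy⟩, hj ⟨y, hy⟩, one_mul, sub_self]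
    · intro x _ hxy
      simp [he₀ x y hy fun h => hxy (Subtype.ext h).symm]
    · simp
  simpa using J.add_mem (hJ hdiff) hsum

lemma vanishingIdeal_sup_span {X : Set (σ → K)} (hX : X.Finite) (F : Set (MvPolynomial σ K)) :
    vanishingIdeal K X ⊔ Ideal.span F =
      vanishingIdeal K {x ∈ X | ∀ f ∈ F, eval x f = 0} := by
  refine le_antisymm (sup_le (vanishingIdeal_anti_mono (Set.sep_subset _ _))
    (Ideal.span_le.mpr fun f hf y hy => hy.2 f hf)) fun g hg => ?_
  refine mem_of_forall_exists_eval_eq hX le_sup_left fun x hx => ?_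
  by_cases hxF : ∀ f ∈ F, eval x f = 0
  · exact ⟨0, zero_mem _, by rw [map_zero, mem_vanishingIdeal_iff_eval.mp hg x ⟨hx, hxF⟩]⟩
  · push Not at hxF
    obtain ⟨f, hf, hfx⟩ := hxF
    refine ⟨C (eval x g / eval x f) * f, ?_, by simp [div_mul_cancel₀ _ hfx]⟩
    exact Ideal.mem_sup_right (Ideal.mul_mem_left _ _ (Ideal.subset_span hf))

lemma vanishingIdeal_colon_span_ne {X : Set (σ → K)} (hX : X.Finite)
    {F : Set (MvPolynomial σ K)} {x : σ → K} (hxX : x ∈ X) (hxF : ∀ f ∈ F, eval x f = 0) :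
    (vanishingIdeal K X).colon (Ideal.span F : Set (MvPolynomial σ K)) ≠ vanishingIdeal K X := by
  obtain ⟨e, he₁, he₀⟩ := exists_eval_eq_indicator hX x
  have hspan : Ideal.span F ≤ RingHom.ker (eval x) := Ideal.span_le.mpr hxF
  have he : e ∈ (vanishingIdeal K X).colon (Ideal.span F : Set (MvPolynomial σ K)) := by
    refine Submodule.mem_colon.mpr fun p hp => mem_vanishingIdeal_iff_eval.mpr fun y hy => ?_
    rw [smul_eq_mul, map_mul]
    rcases eq_or_ne y x with rfl | hyx
    · rw [RingHom.mem_ker.mp (hspan hp), mul_zero]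
    · rw [he₀ y hy hyx, zero_mul]
  intro h
  rw [h] at he
  exact one_ne_zero (he₁ ▸ mem_vanishingIdeal_iff_eval.mp he x hxX)

end MvPolynomial

lemma affVanishingIdeal_eq_vanishingIdeal (X : Set (Fin s → K)) :
    affVanishingIdeal X = MvPolynomial.vanishingIdeal K X :=
  rfl

/-- Lemma (degree formula for the number of zeros in `X`). -/
theorem card_variety_eq_degree (X : Finset (Fin s → K))
    (F : Finset (MvPolynomial (Fin s) K)) :
    (Submodule.colon (affVanishingIdeal (X : Set (Fin s → K)))
          (Ideal.span (F : Set (MvPolynomial (Fin s) K))) ≠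
        affVanishingIdeal (X : Set (Fin s → K)) →
      (VX X F).ncard =
        adeg (affVanishingIdeal (X : Set (Fin s → K)) ⊔
          Ideal.span (F : Set (MvPolynomial (Fin s) K)))) ∧
    (Submodule.colon (affVanishingIdeal (X : Set (Fin s → K)))
          (Ideal.span (F : Set (MvPolynomial (Fin s) K))) =
        affVanishingIdeal (X : Set (Fin s → K)) →
      (VX X F).ncard = 0) := by
  have hV : VX X F = {x ∈ (X : Set (Fin s → K)) | ∀ f ∈ (F : Set _), eval x f = 0} := rfl
  rw [hV, affVanishingIdeal_eq_vanishingIdeal]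
  refine ⟨fun _ => ?_, fun hcolon => ?_⟩
  · rw [adeg, vanishingIdeal_sup_span X.finite_toSet,
      finrank_quotient_vanishingIdeal (X.finite_toSet.sep _)]
  · refine (Set.ncard_eq_zero (X.finite_toSet.sep _)).mpr
      (Set.eq_empty_of_forall_notMem fun x ⟨hxX, hxF⟩ => ?_)
    exact vanishingIdeal_colon_span_ne X.finite_toSet hxX hxF hcolon
end
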